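/- arXiv:math/0511450 — 4 statements merged into one kernel-verified Lean document; each statement's English description precedes it below -/
import Mathlib

section
/- Let G be a second countable locally compact Hausdorff groupoid in which every unit u ∈ G⁰ has a wandering neighborhood (a Cartan groupoid). Then every orbit [u] = {v ∈ G⁰ : ∃ γ ∈ G, r(γ) = u, s(γ) = v} is closed in G⁰. -/
/-- A topological groupoid, modelled by a space `G` of arrows and a space `G0` of units,
with continuous range and source maps `r, s`, a continuous inversion, a continuous
partially-defined multiplication, and a unit map. -/
structure TopGroupoid (G G0 : Type*) [TopologicalSpace G] [TopologicalSpace G0] where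
  r : G → G0
  s : G → G0
  inv : G → G
  mul : (γ η : G) → s γ = r η → G
  unit : G0 → G
  continuous_r : Continuous r
  continuous_s : Continuous s
  continuous_inv : Continuous inv
  continuous_mul : Continuous fun p : {p : G × G // s p.1 = r p.2} => mul p.1.1 p.1.2 p.2
  r_unit : ∀ u, r (unit u) = u
  s_unit : ∀ u, s (unit u) = u
  r_mul : ∀ γ η h, r (mul γ η h) = r γ
  s_mul : ∀ γ η h, s (mul γ η h) = s η
  r_inv : ∀ γ, r (inv γ) = s γ
  s_inv : ∀ γ, s (inv γ) = r γ
  inv_mul : ∀ γ, mul (inv γ) γ (s_inv γ) = unit (s γ)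
  mul_inv : ∀ γ, mul γ (inv γ) (r_inv γ).symm = unit (r γ)

/-- in a second countable locally compact Hausdorff Cartan groupoid
(every unit has a wandering neighborhood), every orbit is closed in `G⁰`. -/
theorem orbit_closed_of_cartan {G G0 : Type*} [TopologicalSpace G] [TopologicalSpace G0]
    [T2Space G] [LocallyCompactSpace G] [SecondCountableTopology G]
    [T2Space G0] [LocallyCompactSpace G0] [SecondCountableTopology G0]
    (𝒢 : TopGroupoid G G0)
    (cartan : ∀ x : G0, ∃ N ∈ nhds x,
      IsCompact (closure {γ : G | 𝒢.r γ ∈ N ∧ 𝒢.s γ ∈ N}))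
    (u : G0) :
    IsClosed {v : G0 | ∃ γ : G, 𝒢.r γ = u ∧ 𝒢.s γ = v} := by

  apply isClosed_of_closure_subset
  intro v hv
  obtain ⟨N, hN, hK⟩ := cartan v
  have hUv : interior N ∈ nhds v := interior_mem_nhds.mpr hN
  -- pick a point w of the orbit inside N, with an arrow γ₀ : u → w
  obtain ⟨w, hwU, γ₀, hr₀, hs₀⟩ : ∃ w ∈ interior N, ∃ γ : G, 𝒢.r γ = u ∧ 𝒢.s γ = w := by
    obtain ⟨w, hwU, hworb⟩ := (mem_closure_iff_nhds.mp hv (interior N) hUv)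
    exact ⟨w, hwU, hworb⟩
  have hwN : w ∈ N := interior_subset hwU
  -- the compact set of arrows in the closure of G|_N with range w
  set K : Set G := closure {γ : G | 𝒢.r γ ∈ N ∧ 𝒢.s γ ∈ N} ∩ 𝒢.r ⁻¹' {w} with hKdef
  have hKcomp : IsCompact K :=
    hK.inter_right (isClosed_singleton.preimage 𝒢.continuous_r)
  have hsK : IsClosed (𝒢.s '' K) := (hKcomp.image 𝒢.continuous_s).isClosed
  -- the orbit intersected with interior N lies in s(K)
  have hsub : {v : G0 | ∃ γ : G, 𝒢.r γ = u ∧ 𝒢.s γ = v} ∩ interior N ⊆ 𝒢.s '' K := by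
    rintro x ⟨⟨γx, hrx, hsx⟩, hxU⟩
    have hcomp : 𝒢.s (𝒢.inv γ₀) = 𝒢.r γx := by rw [𝒢.s_inv, hr₀, hrx]
    refine ⟨𝒢.mul (𝒢.inv γ₀) γx hcomp, ⟨subset_closure ⟨?_, ?_⟩, ?_⟩, ?_⟩
    · rw [𝒢.r_mul, 𝒢.r_inv, hs₀]; exact hwN
    · rw [𝒢.s_mul, hsx]; exact interior_subset hxU
    · show 𝒢.r _ ∈ ({w} : Set G0)
      rw [𝒢.r_mul, 𝒢.r_inv, hs₀]; rfl
    · rw [𝒢.s_mul, hsx]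
  -- v is in the closure of orbit ∩ interior N, hence in s(K)
  have hvcl : v ∈ closure ({v : G0 | ∃ γ : G, 𝒢.r γ = u ∧ 𝒢.s γ = v} ∩ interior N) := by
    rw [mem_closure_iff_nhds] at hv ⊢
    intro t ht
    obtain ⟨x, hx1, hx2⟩ := hv (t ∩ interior N) (Filter.inter_mem ht hUv)
    exact ⟨x, hx1.1, hx2, hx1.2⟩
  have hvK : v ∈ 𝒢.s '' K := hsK.closure_subset ((closure_mono hsub) hvcl)
  obtain ⟨η, ⟨-, hηr⟩, hηs⟩ := hvK
  have hηrw : 𝒢.r η = w := hηr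
  have hcomp : 𝒢.s γ₀ = 𝒢.r η := by rw [hs₀, hηrw]
  exact ⟨𝒢.mul γ₀ η hcomp, by rw [𝒢.r_mul, hr₀], by rw [𝒢.s_mul, hηs]⟩
end

section
/- Let G be a second countable locally compact Hausdorff Cartan groupoid with open range and source maps, let U ⊆ G⁰ be an open wandering set, and let V = [U] be its saturation. Then the orbit spaces U/(G|_U) and V/(G|_V) are homeomorphic, via the map sending the G|_U-orbit of x ∈ U to its G|_V-orbit. -/
namespace TopGroupoid

variable {G G0 : Type*} [TopologicalSpace G] [TopologicalSpace G0] (𝒢 : TopGroupoid G G0)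

-- The orbit relation of `G|_W`: an arrow between points of `W` lies in `G|_W` automatically.
def OrbitRel (W : Set G0) (x y : W) : Prop :=
  ∃ γ : G, 𝒢.r γ = (x : G0) ∧ 𝒢.s γ = (y : G0)

theorem orbitRel_equivalence (W : Set G0) : Equivalence (𝒢.OrbitRel W) where
  refl x := ⟨𝒢.unit x, 𝒢.r_unit x, 𝒢.s_unit x⟩
  symm := by
    rintro x y ⟨γ, hr, hs⟩
    exact ⟨𝒢.inv γ, by rw [𝒢.r_inv, hs], by rw [𝒢.s_inv, hr]⟩
  trans := by
    rintro x y z ⟨γ, hγr, hγs⟩ ⟨η, hηr, hηs⟩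
    exact ⟨𝒢.mul γ η (hγs.trans hηr.symm), (𝒢.r_mul _ _ _).trans hγr,
      (𝒢.s_mul _ _ _).trans hηs⟩

variable {𝒢}

theorem quot_mk_eq_iff {W : Set G0} {x y : W} :
    Quot.mk (𝒢.OrbitRel W) x = Quot.mk _ y ↔ 𝒢.OrbitRel W x y := by
  rw [Quot.eq, (𝒢.orbitRel_equivalence W).eqvGen_iff]

variable (𝒢)

def orbitInclusion {W W' : Set G0} (h : W ⊆ W') :
    Quot (𝒢.OrbitRel W) → Quot (𝒢.OrbitRel W') :=
  Quot.map (Set.inclusion h) fun _ _ hxy => hxy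

variable {𝒢} {W W' : Set G0} (h : W ⊆ W')

theorem continuous_orbitInclusion : Continuous (𝒢.orbitInclusion h) :=
  continuous_quot_lift _ (continuous_quot_mk.comp (continuous_inclusion h))

theorem orbitInclusion_injective : Function.Injective (𝒢.orbitInclusion h) := by
  rintro ⟨x⟩ ⟨y⟩ hxy
  exact Quot.sound (quot_mk_eq_iff (W := W').mp hxy)

theorem orbitInclusion_surjective (hsat : W' ⊆ 𝒢.s '' (𝒢.r ⁻¹' W)) :
    Function.Surjective (𝒢.orbitInclusion h) := by
  rintro ⟨y⟩
  obtain ⟨γ, hγ, hγy⟩ := hsat y.2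
  exact ⟨Quot.mk _ ⟨𝒢.r γ, hγ⟩, Quot.sound ⟨γ, rfl, hγy⟩⟩

theorem preimage_image_orbitInclusion (A : Set (Quot (𝒢.OrbitRel W))) :
    Quot.mk (𝒢.OrbitRel W') ⁻¹' (𝒢.orbitInclusion h '' A) =
      Subtype.val ⁻¹' (𝒢.s '' (𝒢.r ⁻¹' (Subtype.val '' (Quot.mk _ ⁻¹' A)))) := by
  ext y
  constructor
  · rintro ⟨⟨x⟩, hxA, hxy⟩
    obtain ⟨γ, hγx, hγy⟩ := quot_mk_eq_iff.mp hxy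
    exact ⟨γ, ⟨x, hxA, hγx.symm⟩, hγy⟩
  · rintro ⟨γ, ⟨x, hxA, hxγ⟩, hγy⟩
    exact ⟨Quot.mk _ x, hxA, Quot.sound ⟨γ, hxγ.symm, hγy⟩⟩

theorem isOpenMap_orbitInclusion (hs : IsOpenMap 𝒢.s) (hW : IsOpen W) :
    IsOpenMap (𝒢.orbitInclusion h) := by
  intro A hA
  have hA' : IsOpen (Subtype.val '' (Quot.mk (𝒢.OrbitRel W) ⁻¹' A)) :=
    hW.isOpenMap_subtype_val _ (hA.preimage continuous_quot_mk)
  rw [← isQuotientMap_quot_mk.isOpen_preimage, preimage_image_orbitInclusion]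
  exact (hs _ (hA'.preimage 𝒢.continuous_r)).preimage continuous_subtype_val

noncomputable def orbitInclusionHomeomorph (hs : IsOpenMap 𝒢.s) (hW : IsOpen W)
    (hsat : W' ⊆ 𝒢.s '' (𝒢.r ⁻¹' W)) :
    Quot (𝒢.OrbitRel W) ≃ₜ Quot (𝒢.OrbitRel W') :=
  (Equiv.ofBijective _ ⟨orbitInclusion_injective h, orbitInclusion_surjective h hsat⟩)
    |>.toHomeomorphOfContinuousOpen (continuous_orbitInclusion h)
      (isOpenMap_orbitInclusion h hs hW)

end TopGroupoid

theorem orbitSpace_saturation_homeomorph_general {G G0 : Type*}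
    [TopologicalSpace G] [TopologicalSpace G0]
    (𝒢 : TopGroupoid G G0) (hs : IsOpenMap 𝒢.s)
    (U : Set G0) (hU : IsOpen U)
    (V : Set G0) (hV : V = 𝒢.s '' (𝒢.r ⁻¹' U))
    (hUV : U ⊆ V) :
    ∃ h : Quot (fun x y : U => ∃ γ : G, 𝒢.r γ = (x : G0) ∧ 𝒢.s γ = (y : G0)) ≃ₜ
        Quot (fun x y : V => ∃ γ : G, 𝒢.r γ = (x : G0) ∧ 𝒢.s γ = (y : G0)),
      ∀ x : U, h (Quot.mk _ x) = Quot.mk _ (⟨(x : G0), hUV x.2⟩ : V) :=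
  ⟨TopGroupoid.orbitInclusionHomeomorph hUV hs hU hV.subset, fun _ => rfl⟩

/-- for a second countable locally compact Hausdorff Cartan groupoid with open
range and source maps, if `U` is an open wandering set and `V = [U]` its saturation, then the
orbit spaces `U/(G|_U)` and `V/(G|_V)` are homeomorphic via the map sending the `G|_U`-orbit
of `x ∈ U` to its `G|_V`-orbit. -/
theorem orbitSpace_saturation_homeomorph {G G0 : Type*}
    [TopologicalSpace G] [TopologicalSpace G0]
    [T2Space G] [LocallyCompactSpace G] [SecondCountableTopology G]
    [T2Space G0] [LocallyCompactSpace G0] [SecondCountableTopology G0]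
    (𝒢 : TopGroupoid G G0) (hr : IsOpenMap 𝒢.r) (hs : IsOpenMap 𝒢.s)
    (cartan : ∀ x : G0, ∃ N ∈ nhds x,
      IsCompact (closure {γ : G | 𝒢.r γ ∈ N ∧ 𝒢.s γ ∈ N}))
    (U : Set G0) (hU : IsOpen U)
    (hUwand : IsCompact (closure {γ : G | 𝒢.r γ ∈ U ∧ 𝒢.s γ ∈ U}))
    (V : Set G0) (hV : V = 𝒢.s '' (𝒢.r ⁻¹' U))
    (hUV : U ⊆ V) :
    ∃ h : Quot (fun x y : U => ∃ γ : G, 𝒢.r γ = (x : G0) ∧ 𝒢.s γ = (y : G0)) ≃ₜ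
        Quot (fun x y : V => ∃ γ : G, 𝒢.r γ = (x : G0) ∧ 𝒢.s γ = (y : G0)),
      ∀ x : U, h (Quot.mk _ x) = Quot.mk _ (⟨(x : G0), hUV x.2⟩ : V) :=
  orbitSpace_saturation_homeomorph_general 𝒢 hs U hU V hV hUV
end

section
/- Let X be a second countable locally compact Hausdorff space with an equivalence relation R ⊆ X × X that is an Fσ subset, with open quotient map q : X → X/R. If the quotient space X/R is T₀, then every equivalence class is locally closed in X (i.e., the intersection of an open and a closed set). -/
/-- an implication of Ramsay's theorem: let `X` be a second countable locally
compact Hausdorff space with an equivalence relation `R ⊆ X × X` that is Fσ and whose quotient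
map is open.  If the quotient space is T₀, then every equivalence class is locally closed. -/
theorem class_locallyClosed_of_t0 {X : Type*} [TopologicalSpace X]
    [T2Space X] [LocallyCompactSpace X] [SecondCountableTopology X]
    (R : Set (X × X)) (hequiv : Equivalence fun x y : X => (x, y) ∈ R)
    (hFsigma : ∃ F : ℕ → Set (X × X), (∀ n, IsClosed (F n)) ∧ R = ⋃ n, F n)
    (hopen : IsOpenMap (Quot.mk fun x y : X => (x, y) ∈ R))
    (ht0 : T0Space (Quot fun x y : X => (x, y) ∈ R))
    (x : X) :
    IsLocallyClosed {y : X | (x, y) ∈ R} := by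
  obtain ⟨F, hFc, hFR⟩ := hFsigma
  set r : X → X → Prop := fun x y : X => (x, y) ∈ R with hr
  set q : X → Quot r := Quot.mk r with hqdef
  have hq : Continuous q := continuous_quot_mk
  have qeq : ∀ a b : X, q a = q b ↔ r a b := fun a b =>
    ⟨fun h => hequiv.eqvGen_iff.mp (Quot.eqvGen_exact h), fun h => Quot.sound h⟩
  set S : Set X := {y | (x, y) ∈ R} with hS
  have hxS : x ∈ S := hequiv.refl x
  set C : Set X := closure S with hC
  -- saturations of open sets are open
  have hsat_open : ∀ U : Set X, IsOpen U → IsOpen (q ⁻¹' (q '' U)) := fun U hU =>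
    hq.isOpen_preimage _ (hopen U hU)
  -- C is saturated
  have hCsat : ∀ z w, z ∈ C → r z w → w ∈ C := by
    intro z w hz hzw
    rw [hC, mem_closure_iff]
    intro O hO hwO
    have hzV : z ∈ q ⁻¹' (q '' O) := ⟨w, hwO, ((qeq z w).mpr hzw).symm ▸ rfl⟩
    have := (mem_closure_iff.mp hz) _ (hsat_open O hO) hzV
    obtain ⟨x', hx'V, hx'S⟩ := this
    obtain ⟨u, huO, hqu⟩ := hx'V
    refine ⟨u, huO, ?_⟩
    exact hequiv.trans hx'S ((qeq x' u).mp hqu.symm)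
  -- every point of C \ S avoids the saturation of some basic open set containing x
  have hmeager : ∀ y ∈ C, y ∉ S →
      ∃ B ∈ TopologicalSpace.countableBasis X, x ∈ B ∧ y ∉ q ⁻¹' (q '' B) := by
    intro y hyC hyS
    have hqxy : q x ≠ q y := fun h => hyS ((qeq x y).mp h)
    have hySpec : q y ∈ closure {q x} := by
      have hS' : S = q ⁻¹' {q x} := by
        ext z
        simp only [hS, Set.mem_setOf_eq, Set.mem_preimage, Set.mem_singleton_iff]
        exact ⟨fun h => Quot.sound (hequiv.symm h), fun h => hequiv.symm ((qeq z x).mp h)⟩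
      have hsub := hq.closure_preimage_subset {q x}
      rw [hC, hS'] at hyC
      exact hsub hyC
    have hxnSpec : q x ∉ closure {q y} := by
      intro hmem
      exact hqxy (Specializes.antisymm (specializes_iff_mem_closure.mpr hySpec)
        (specializes_iff_mem_closure.mpr hmem)).eq
    set W : Set (Quot r) := (closure {q y})ᶜ with hW
    have hWopen : IsOpen W := isClosed_closure.isOpen_compl
    have hxW : x ∈ q ⁻¹' W := hxnSpec
    have hyW : y ∉ q ⁻¹' W := fun h => h (subset_closure rfl)
    obtain ⟨B, hBb, hxB, hBsub⟩ :=
      (TopologicalSpace.isBasis_countableBasis X).isOpen_iff.mp (hq.isOpen_preimage W hWopen)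
        x hxW
    refine ⟨B, hBb, hxB, fun hy => ?_⟩
    obtain ⟨u, huB, hqu⟩ := hy
    exact hyW (show q y ∈ W from hqu ▸ hBsub huB)
  -- Baire category setup on the subtype C
  haveI : Nonempty C := ⟨⟨x, subset_closure hxS⟩⟩
  haveI : LocallyCompactSpace C := isClosed_closure.locallyCompactSpace
  set ι := ℕ ⊕ {B : Set X // B ∈ TopologicalSpace.countableBasis X ∧ x ∈ B} with hι
  haveI : Countable {B : Set X // B ∈ TopologicalSpace.countableBasis X ∧ x ∈ B} := by
    have : {B : Set X | B ∈ TopologicalSpace.countableBasis X ∧ x ∈ B}.Countable :=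
      (TopologicalSpace.countable_countableBasis X).mono fun B hB => hB.1
    exact this.to_subtype
  set f : ι → Set C := fun i =>
    match i with
    | Sum.inl n => Subtype.val ⁻¹' {y : X | (x, y) ∈ F n}
    | Sum.inr B => Subtype.val ⁻¹' (q ⁻¹' (q '' B.1))ᶜ with hf
  have hfclosed : ∀ i, IsClosed (f i) := by
    rintro (n | B)
    · exact (((hFc n).preimage (Continuous.prodMk_right x)).preimage continuous_subtype_val)
    · exact ((hsat_open B.1 ((TopologicalSpace.isBasis_countableBasis X).isOpen B.2.1)).isClosed_compl).preimage
        continuous_subtype_val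
  have hfcover : ⋃ i, f i = Set.univ := by
    rw [Set.eq_univ_iff_forall]
    intro z
    by_cases hzS : z.1 ∈ S
    · have hmem : (x, z.1) ∈ ⋃ n, F n := by rw [← hFR]; exact hzS
      obtain ⟨n, hn⟩ := Set.mem_iUnion.mp hmem
      exact Set.mem_iUnion.mpr ⟨Sum.inl n, hn⟩
    · obtain ⟨B, hBb, hxB, hyB⟩ := hmeager z.1 z.2 hzS
      exact Set.mem_iUnion.mpr ⟨Sum.inr ⟨B, hBb, hxB⟩, hyB⟩
  obtain ⟨i, ⟨z, hz⟩⟩ := nonempty_interior_of_iUnion_of_closed hfclosed hfcover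
  -- open sets in the subtype come from open sets in X
  obtain ⟨U, hUopen, hUeq⟩ := isOpen_induced_iff.mp (isOpen_interior (s := f i))
  have hzU : z ∈ Subtype.val ⁻¹' U := hUeq ▸ hz
  match i with
  | Sum.inr B =>
    -- contradiction: the complement of the saturation of B has empty interior in C
    exfalso
    have hzC : (z : X) ∈ C := z.2
    obtain ⟨w, hwU, hwS⟩ := (mem_closure_iff.mp hzC) U hUopen hzU
    have hwC : w ∈ C := subset_closure hwS
    have hmem : (⟨w, hwC⟩ : C) ∈ interior (f (Sum.inr B)) := hUeq ▸ hwU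
    have hmem2 : (⟨w, hwC⟩ : C) ∈ f (Sum.inr B) := interior_subset hmem
    have hwB : w ∉ q ⁻¹' (q '' B.1) := hmem2
    exact hwB ⟨x, B.2.2, ((qeq w x).mpr (hequiv.symm hwS)).symm ▸ rfl⟩
  | Sum.inl n =>
    -- U ∩ C is a nonempty relatively open subset of C contained in S
    have hUC : U ∩ C ⊆ S := by
      intro w ⟨hwU, hwC⟩
      have hmem : (⟨w, hwC⟩ : C) ∈ interior (f (Sum.inl n)) := hUeq ▸ hwU
      have hmem2 : (⟨w, hwC⟩ : C) ∈ f (Sum.inl n) := interior_subset hmem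
      have hFn : (x, w) ∈ F n := hmem2
      show (x, w) ∈ R
      rw [hFR]
      exact Set.mem_iUnion.mpr ⟨n, hFn⟩
    have hzUC : (z : X) ∈ U ∩ C := ⟨hzU, z.2⟩
    have hzS : (z : X) ∈ S := hUC hzUC
    -- the class S equals (saturation of U) ∩ C
    refine ⟨q ⁻¹' (q '' U), C, hsat_open U hUopen, isClosed_closure, ?_⟩
    ext w
    constructor
    · intro hwS
      refine ⟨⟨(z : X), hzU, ?_⟩, subset_closure hwS⟩
      exact ((qeq w (z : X)).mpr (hequiv.trans (hequiv.symm hwS) hzS)).symm ▸ rfl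
    · rintro ⟨⟨u, huU, hqu⟩, hwC⟩
      have hwu : r w u := (qeq w u).mp hqu.symm
      have huC : u ∈ C := hCsat w u hwC hwu
      have huS : u ∈ S := hUC ⟨huU, huC⟩
      exact hequiv.trans huS (hequiv.symm hwu)
end

section
/- Let G be a second countable locally compact Hausdorff Cartan groupoid. Suppose u ∈ G⁰, vₙ → v in G⁰ with each vₙ ∈ [u], and v has a closed wandering neighborhood. Then v ∈ [u]. -/
set_option maxHeartbeats 1000000 in
/-- in a second countable locally compact Hausdorff Cartan groupoid, if
`vₙ → v` with each `vₙ ∈ [u]` and `v` has a closed wandering neighborhood, then `v ∈ [u]`. -/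

theorem mem_orbit_of_tendsto {G G0 : Type*}
    [TopologicalSpace G] [TopologicalSpace G0]
    [T2Space G] [LocallyCompactSpace G] [SecondCountableTopology G]
    [T2Space G0] [LocallyCompactSpace G0] [SecondCountableTopology G0]
    (𝒢 : TopGroupoid G G0)
    (cartan : ∀ x : G0, ∃ N ∈ nhds x,
      IsCompact (closure {γ : G | 𝒢.r γ ∈ N ∧ 𝒢.s γ ∈ N}))
    (u v : G0) (vseq : ℕ → G0)
    (hconv : Filter.Tendsto vseq Filter.atTop (nhds v))
    (horbit : ∀ n, ∃ γ : G, 𝒢.r γ = u ∧ 𝒢.s γ = vseq n)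
    (hN : ∃ N ∈ nhds v, IsClosed N ∧
      IsCompact (closure {γ : G | 𝒢.r γ ∈ N ∧ 𝒢.s γ ∈ N})) :
    ∃ γ : G, 𝒢.r γ = u ∧ 𝒢.s γ = v := by
  obtain ⟨N, hNv, _hNclosed, hNcomp⟩ := hN
  choose γ hr hs using horbit
  obtain ⟨m, hm⟩ := Filter.eventually_atTop.mp (hconv.eventually_mem hNv)
  have hkey : ∀ n, 𝒢.s (𝒢.inv (γ m)) = 𝒢.r (γ (n + m)) := by
    intro n; rw [𝒢.s_inv, hr, hr]
  set x : ℕ → G := fun n => 𝒢.mul (𝒢.inv (γ m)) (γ (n + m)) (hkey n) with hx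
  have hxmem : ∀ n, x n ∈ closure {γ : G | 𝒢.r γ ∈ N ∧ 𝒢.s γ ∈ N} := by
    intro n
    apply subset_closure
    constructor
    · rw [hx]; simp only [𝒢.r_mul, 𝒢.r_inv, hs]
      exact hm m le_rfl
    · rw [hx]; simp only [𝒢.s_mul, hs]
      exact hm (n + m) (Nat.le_add_left m n)
  obtain ⟨η, -, φ, hφ, htend⟩ := hNcomp.tendsto_subseq hxmem
  have hsx : ∀ k, 𝒢.s (x (φ k)) = vseq (φ k + m) := by
    intro k; rw [hx]; simp only [𝒢.s_mul, hs]
  have hrx : ∀ k, 𝒢.r (x (φ k)) = vseq m := by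
    intro k; rw [hx]; simp only [𝒢.r_mul, 𝒢.r_inv, hs]
  have hsη : 𝒢.s η = v := by
    have t1 : Filter.Tendsto (fun k => 𝒢.s (x (φ k))) Filter.atTop (nhds (𝒢.s η)) :=
      (𝒢.continuous_s.tendsto η).comp htend
    have t2 : Filter.Tendsto (fun k => vseq (φ k + m)) Filter.atTop (nhds v) :=
      hconv.comp ((Filter.tendsto_add_atTop_nat m).comp hφ.tendsto_atTop)
    exact tendsto_nhds_unique (by simpa only [hsx] using t1) t2
  have hrη : 𝒢.r η = vseq m := by
    have t1 : Filter.Tendsto (fun k => 𝒢.r (x (φ k))) Filter.atTop (nhds (𝒢.r η)) :=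
      (𝒢.continuous_r.tendsto η).comp htend
    exact tendsto_nhds_unique (by simpa only [hrx] using t1) tendsto_const_nhds
  have hcomp : 𝒢.s (γ m) = 𝒢.r η := by rw [hrη, hs]
  exact ⟨𝒢.mul (γ m) η hcomp, by rw [𝒢.r_mul, hr], by rw [𝒢.s_mul, hsη]⟩
end
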